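/- Bound-inversion guarantee: let μ̂ ∈ (0,1), δ ∈ (0,1), and n a positive natural number. If α is any number in [0, μ̂] satisfying KL(μ̂‖α) ≥ log(1/δ)/n, and Z_1,...,Z_n are i.i.d. Bernoulli(μ) with μ ∈ (0,1), then the event {the empirical mean equals μ̂ and μ ≤ α} has probability at most δ. -/

import Mathlib

open MeasureTheory ProbabilityTheory

noncomputable def bernoulliKL (p q : ℝ) : ℝ :=
  p * Real.log (p / q) + (1 - p) * Real.log ((1 - p) / (1 - q))


lemma kl_hasDerivAt {p x : ℝ} (hp0 : 0 < p) (hp1 : p < 1) (hx0 : 0 < x) (hx1 : x < 1) :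
    HasDerivAt (bernoulliKL p) (-(p / x) + (1 - p) / (1 - x)) x := by
  have hxne : x ≠ 0 := hx0.ne'
  have h1xne : (1 : ℝ) - x ≠ 0 := by linarith
  have h1 : HasDerivAt (fun q : ℝ => p / q) (p * (-(x ^ 2)⁻¹)) x :=
    (hasDerivAt_inv hxne).const_mul p
  have h1' : HasDerivAt (fun q : ℝ => Real.log (p / q)) ((p * (-(x ^ 2)⁻¹)) / (p / x)) x :=
    h1.log (by positivity)
  have h2 : HasDerivAt (fun q : ℝ => (1 : ℝ) - q) (-1) x := by
    simpa using (hasDerivAt_id x).const_sub 1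
  have h2' : HasDerivAt (fun q : ℝ => ((1 : ℝ) - q)⁻¹) (-(-1) / (1 - x) ^ 2) x := h2.inv h1xne
  have h2'' : HasDerivAt (fun q : ℝ => (1 - p) / (1 - q))
      ((1 - p) * (-(-1) / (1 - x) ^ 2)) x := h2'.const_mul (1 - p)
  have h2''' : HasDerivAt (fun q : ℝ => Real.log ((1 - p) / (1 - q)))
      (((1 - p) * (-(-1) / (1 - x) ^ 2)) / ((1 - p) / (1 - x))) x := by
    refine h2''.log ?_
    have : (0:ℝ) < (1 - p) / (1 - x) := by
      apply div_pos <;> linarith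
    exact this.ne'
  have := ((h1'.const_mul p).add (h2'''.const_mul (1 - p)))
  refine this.congr_deriv ?_
  have hpne : p ≠ 0 := hp0.ne'
  have h1pne : (1:ℝ) - p ≠ 0 := by linarith
  field_simp

lemma kl_anti {p μ α : ℝ} (hp0 : 0 < p) (hp1 : p < 1) (hμ0 : 0 < μ) (hμα : μ ≤ α)
    (hαp : α ≤ p) : bernoulliKL p α ≤ bernoulliKL p μ := by
  have key : AntitoneOn (bernoulliKL p) (Set.Icc μ α) := by
    apply antitoneOn_of_deriv_nonpos (convex_Icc μ α)
    · intro x hx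
      exact (kl_hasDerivAt hp0 hp1 (lt_of_lt_of_le hμ0 hx.1)
        (lt_of_le_of_lt (hx.2.trans hαp) hp1)).continuousAt.continuousWithinAt
    · intro x hx
      rw [interior_Icc] at hx
      have hx0 : 0 < x := lt_trans hμ0 hx.1
      have hx1 : x < 1 := lt_of_lt_of_le hx.2 (hαp.trans hp1.le)
      exact (kl_hasDerivAt hp0 hp1 hx0 hx1).differentiableAt.differentiableWithinAt
    · intro x hx
      rw [interior_Icc] at hx
      have hx0 : 0 < x := lt_trans hμ0 hx.1
      have hx1 : x < 1 := lt_of_lt_of_le hx.2 (hαp.trans hp1.le)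
      rw [(kl_hasDerivAt hp0 hp1 hx0 hx1).deriv]
      have h1x : (0:ℝ) < 1 - x := by linarith
      have hxp : x ≤ p := hx.2.le.trans hαp
      rw [neg_add_nonpos_iff, div_le_div_iff₀ h1x hx0]
      nlinarith
  exact key (Set.left_mem_Icc.mpr hμα) (Set.right_mem_Icc.mpr hμα) hμα


lemma kl_exp_id {p μ : ℝ} (hp0 : 0 < p) (hp1 : p < 1) (hμ0 : 0 < μ) (hμ1 : μ < 1) :
    Real.exp (-(Real.log (p * (1 - μ) / ((1 - p) * μ)) * p)) *
      (1 - μ + μ * Real.exp (Real.log (p * (1 - μ) / ((1 - p) * μ)))) =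
    Real.exp (-(bernoulliKL p μ)) := by
  have h1p : (0:ℝ) < 1 - p := by linarith
  have h1μ : (0:ℝ) < 1 - μ := by linarith
  have harg : (0:ℝ) < p * (1 - μ) / ((1 - p) * μ) := by positivity
  rw [Real.exp_log harg]
  have h2 : 1 - μ + μ * (p * (1 - μ) / ((1 - p) * μ)) = (1 - μ) / (1 - p) := by
    field_simp
    ring
  rw [h2, ← Real.exp_log (show (0:ℝ) < (1 - μ) / (1 - p) by positivity), ← Real.exp_add]
  congr 1
  rw [bernoulliKL, Real.log_div (by positivity) (by positivity),
    Real.log_mul (by positivity) (by positivity), Real.log_mul (by positivity) (by positivity),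
    Real.log_div hp0.ne' hμ0.ne', Real.log_div h1p.ne' h1μ.ne',
    Real.log_div h1μ.ne' h1p.ne']
  ring

theorem bound_inversion_guarantee
    {Ω : Type*} [MeasureSpace Ω] [IsProbabilityMeasure (ℙ : Measure Ω)]
    (n : ℕ) (hn : 0 < n) (μhat δ : ℝ) (hμhat : μhat ∈ Set.Ioo (0 : ℝ) 1)
    (hδ : δ ∈ Set.Ioo (0 : ℝ) 1)
    (α : ℝ) (hα : α ∈ Set.Icc 0 μhat)
    (hKL : Real.log (1 / δ) / n ≤ bernoulliKL μhat α)
    (μ : ℝ) (hμ : μ ∈ Set.Ioo (0 : ℝ) 1)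
    (Z : Fin n → Ω → ℝ) (hmeas : ∀ i, Measurable (Z i))
    (hindep : iIndepFun Z ℙ)
    (hval : ∀ i ω, Z i ω = 0 ∨ Z i ω = 1)
    (hber : ∀ i, (ℙ {ω | Z i ω = 1}).toReal = μ)
    (hμα : μ ≤ α) :
    (ℙ {ω | μhat ≤ (∑ i, Z i ω) / n}).toReal ≤ δ := by
  obtain ⟨hp0, hp1⟩ := hμhat
  obtain ⟨hμ0, hμ1⟩ := hμ
  obtain ⟨hδ0, hδ1⟩ := hδ
  have hαp : α ≤ μhat := hα.2
  have hμp : μ ≤ μhat := hμα.trans hαp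
  have hnpos : (0:ℝ) < n := Nat.cast_pos.mpr hn
  set t := Real.log (μhat * (1 - μ) / ((1 - μhat) * μ)) with ht_def
  have h1p : (0:ℝ) < 1 - μhat := by linarith
  have h1μ : (0:ℝ) < 1 - μ := by linarith
  have ht0 : 0 ≤ t := by
    apply Real.log_nonneg
    rw [le_div_iff₀ (by positivity)]
    nlinarith
  -- rewrite event
  have hev : {ω | μhat ≤ (∑ i, Z i ω) / n} = {ω | (n:ℝ) * μhat ≤ (∑ i, Z i) ω} := by
    ext ω
    simp only [Set.mem_setOf_eq, Finset.sum_apply]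
    rw [le_div_iff₀ hnpos, mul_comm]
  -- integrability and mgf of each Z i
  have hsetmeas : ∀ i, MeasurableSet {ω | Z i ω = 1} := fun i =>
    (hmeas i) (measurableSet_singleton 1)
  have hZind : ∀ i, Z i = Set.indicator {ω | Z i ω = 1} (fun _ => (1:ℝ)) := by
    intro i
    funext ω
    rcases hval i ω with h | h <;> simp [Set.indicator_apply, Set.mem_setOf_eq, h]
  have hZint : ∀ i, Integrable (Z i) ℙ := by
    intro i
    rw [hZind i]
    exact (integrable_const (1:ℝ)).indicator (hsetmeas i)
  have hZintegral : ∀ i, ∫ ω, Z i ω ∂ℙ = μ := by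
    intro i
    conv_lhs => rw [hZind i]
    rw [integral_indicator_const _ (hsetmeas i)]
    simp
    exact hber i
  have hexp_eq : ∀ i, (fun ω => Real.exp (t * Z i ω)) =
      fun ω => 1 + (Real.exp t - 1) * Z i ω := by
    intro i
    funext ω
    rcases hval i ω with h | h <;> simp [h]
  have hint : ∀ i, Integrable (fun ω => Real.exp (t * Z i ω)) ℙ := by
    intro i
    rw [hexp_eq i]
    exact (integrable_const (1:ℝ)).add ((hZint i).const_mul _)
  have hmgf : ∀ i, mgf (Z i) ℙ t = 1 - μ + μ * Real.exp t := by
    intro i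
    rw [mgf, hexp_eq i, integral_add (integrable_const 1) ((hZint i).const_mul _),
      integral_const, integral_const_mul, hZintegral i]
    simp
    ring
  have hmgfpos : (0:ℝ) < 1 - μ + μ * Real.exp t := by
    have := Real.exp_pos t
    nlinarith
  calc (ℙ {ω | μhat ≤ (∑ i, Z i ω) / n}).toReal
      ≤ Real.exp (-t * ((n:ℝ) * μhat)) * mgf (∑ i, Z i) ℙ t := by
        rw [hev]
        exact measure_ge_le_exp_mul_mgf _ ht0
          (hindep.integrable_exp_mul_sum hmeas (fun i _ => hint i))
    _ = Real.exp (-t * ((n:ℝ) * μhat)) * (1 - μ + μ * Real.exp t) ^ n := by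
        rw [hindep.mgf_sum hmeas]
        simp [hmgf]
    _ = (Real.exp (-(t * μhat)) * (1 - μ + μ * Real.exp t)) ^ n := by
        rw [mul_pow, ← Real.exp_nat_mul]
        ring_nf
    _ = Real.exp (-(bernoulliKL μhat μ)) ^ n := by
        rw [kl_exp_id hp0 hp1 hμ0 hμ1]
    _ = Real.exp ((n:ℝ) * -(bernoulliKL μhat μ)) := by rw [Real.exp_nat_mul]
    _ ≤ Real.exp ((n:ℝ) * -(bernoulliKL μhat α)) := by
        apply Real.exp_le_exp.mpr
        have := kl_anti hp0 hp1 hμ0 hμα hαp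
        nlinarith
    _ ≤ δ := by
        have h1 : Real.log (1/δ) ≤ (n:ℝ) * bernoulliKL μhat α := by
          rw [div_le_iff₀ hnpos] at hKL
          linarith [hKL]
        have h2 : (n:ℝ) * -(bernoulliKL μhat α) ≤ Real.log δ := by
          rw [one_div, Real.log_inv] at h1
          linarith
        calc Real.exp ((n:ℝ) * -(bernoulliKL μhat α)) ≤ Real.exp (Real.log δ) :=
              Real.exp_le_exp.mpr h2
          _ = δ := Real.exp_log hδ0
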